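/- arXiv:2202.04744 — 3 statements merged into one kernel-verified Lean document; each statement's English description precedes it below -/
import Mathlib

section
/- Let X_1,…,X_n be i.i.d. random variables on X with common law P*, and let P_n = (1/n)∑_{i=1}^n δ_{X_i} be the empirical measure. Then the expected maximum mean discrepancy between the empirical measure and the true law satisfies E[ MMD(P_n, P*) ] = E[ ‖ (1/n)∑_{i=1}^n φ(X_i) − μ_{P*} ‖_H ] ≤ 1/√n. -/
open MeasureTheory ProbabilityTheory
open scoped ENNReal NNReal BigOperators RealInnerProductSpace

/-- Maximum mean discrepancy between two measures, via mean embeddings of a feature map `φ`. -/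
noncomputable def mmd {X H : Type*} [MeasurableSpace X] [NormedAddCommGroup H]
    [NormedSpace ℝ H] (φ : X → H) (P Q : Measure X) : ℝ :=
  ‖(∫ x, φ x ∂P) - ∫ x, φ x ∂Q‖

/-- Empirical measure of the points `x 0, …, x (n-1)`. -/
noncomputable def empMeas {X : Type*} [MeasurableSpace X] (n : ℕ) (x : Fin n → X) : Measure X :=
  (n : ℝ≥0∞)⁻¹ • ∑ i, Measure.dirac (x i)

/-- for i.i.d. data with law `P*`,
`E[ MMD(P_n, P*) ] = E[ ‖ (1/n)∑ φ(X_i) − μ_{P*} ‖ ] ≤ 1/√n`. -/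
theorem mmd_empirical_expectation_le
    {X : Type*} [MeasurableSpace X] {H : Type*} [NormedAddCommGroup H]
    [InnerProductSpace ℝ H] [CompleteSpace H]
    (φ : X → H) (hφmeas : StronglyMeasurable φ) (hφbdd : ∀ x, ‖φ x‖ ≤ 1)
    {Ω : Type*} [MeasurableSpace Ω] (μ : Measure Ω) [IsProbabilityMeasure μ]
    (n : ℕ) (hn : 0 < n)
    (Xs : Fin n → Ω → X) (hXmeas : ∀ i, Measurable (Xs i))
    (Pstar : Measure X) [IsProbabilityMeasure Pstar]
    (hlaw : ∀ i, Measure.map (Xs i) μ = Pstar)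
    (hindep : iIndepFun Xs μ) :
    (∫ ω, mmd φ (empMeas n (fun i => Xs i ω)) Pstar ∂μ
        = ∫ ω, ‖(n : ℝ)⁻¹ • (∑ i, φ (Xs i ω)) - ∫ x, φ x ∂Pstar‖ ∂μ)
    ∧ ∫ ω, ‖(n : ℝ)⁻¹ • (∑ i, φ (Xs i ω)) - ∫ x, φ x ∂Pstar‖ ∂μ
        ≤ 1 / Real.sqrt n := by
  have hnR : (0:ℝ) < n := by exact_mod_cast hn
  set m : H := ∫ x, φ x ∂Pstar with hm_def
  -- basic integrability of φ
  have hφint : Integrable φ Pstar :=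
    (integrable_const (1:ℝ)).mono' hφmeas.aestronglyMeasurable
      (Filter.Eventually.of_forall hφbdd)
  -- the empirical mean embedding is the sample average of features
  have hemp : ∀ x : Fin n → X, (∫ y, φ y ∂(empMeas n x)) = (n:ℝ)⁻¹ • ∑ i, φ (x i) := by
    intro x
    rw [empMeas, integral_smul_measure]
    have h1 : (∫ y, φ y ∂(∑ i : Fin n, Measure.dirac (x i))) = ∑ i : Fin n, φ (x i) := by
      rw [integral_finset_sum_measure fun i _ =>
        (integrable_const (1:ℝ)).mono' hφmeas.aestronglyMeasurable
          (Filter.Eventually.of_forall hφbdd)]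
      exact Finset.sum_congr rfl fun i _ => integral_dirac' φ (x i) hφmeas
    rw [h1]
    congr 1
    simp [ENNReal.toReal_inv]
  have part1 : (∫ ω, mmd φ (empMeas n (fun i => Xs i ω)) Pstar ∂μ
      = ∫ ω, ‖(n : ℝ)⁻¹ • (∑ i, φ (Xs i ω)) - m‖ ∂μ) := by
    refine integral_congr_ae (Filter.Eventually.of_forall fun ω => ?_)
    simp only [mmd, hemp, hm_def]
  refine ⟨part1, ?_⟩
  -- centered variables
  set Y : Fin n → Ω → H := fun i ω => φ (Xs i ω) - m with hY_def
  set S : Ω → H := fun ω => ∑ i, Y i ω with hS_def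
  have hm1 : ‖m‖ ≤ 1 := by
    calc ‖m‖ ≤ ∫ x, ‖φ x‖ ∂Pstar := norm_integral_le_integral_norm φ
      _ ≤ ∫ _x, (1:ℝ) ∂Pstar := integral_mono hφint.norm (integrable_const 1) fun x => hφbdd x
      _ = 1 := by simp
  have hYnorm : ∀ i ω, ‖Y i ω‖ ≤ 2 := fun i ω =>
    (norm_sub_le _ _).trans (by linarith [hφbdd (Xs i ω)])
  have hYm : ∀ i, StronglyMeasurable (Y i) := fun i =>
    (hφmeas.comp_measurable (hXmeas i)).sub stronglyMeasurable_const
  have hSm : StronglyMeasurable S := Finset.stronglyMeasurable_fun_sum _ fun i _ => hYm i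
  have hSnorm : ∀ ω, ‖S ω‖ ≤ 2 * n := by
    intro ω
    calc ‖S ω‖ ≤ ∑ i, ‖Y i ω‖ := norm_sum_le _ _
      _ ≤ ∑ _i : Fin n, (2:ℝ) := Finset.sum_le_sum fun i _ => hYnorm i ω
      _ = 2 * n := by simp [mul_comm]
  -- pointwise identity
  have hpt : ∀ ω, (n : ℝ)⁻¹ • (∑ i, φ (Xs i ω)) - m = (n:ℝ)⁻¹ • S ω := by
    intro ω
    have h1 : S ω = (∑ i, φ (Xs i ω)) - (n:ℝ) • m := by
      rw [hS_def]
      simp only [hY_def, Finset.sum_sub_distrib, Finset.sum_const, Finset.card_univ,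
        Fintype.card_fin]
      congr 1
      exact (Nat.cast_smul_eq_nsmul ℝ n m).symm
    rw [h1, smul_sub, smul_smul, inv_mul_cancel₀ hnR.ne', one_smul]
  -- mean of centered feature is zero
  have hfint : Integrable (fun x => φ x - m) Pstar := hφint.sub (integrable_const m)
  have hf0 : (∫ x, φ x - m ∂Pstar) = 0 := by
    rw [integral_sub hφint (integrable_const m), integral_const]
    simp [hm_def]
  -- off-diagonal terms vanish
  have hoff : ∀ i j : Fin n, i ≠ j → (∫ ω, ⟪Y i ω, Y j ω⟫ ∂μ) = 0 := by
    intro i j hij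
    have hpairmap : Measure.map (fun ω => (Xs i ω, Xs j ω)) μ = Pstar.prod Pstar := by
      have h := (indepFun_iff_map_prod_eq_prod_map_map (hXmeas i).aemeasurable
        (hXmeas j).aemeasurable).mp (hindep.indepFun hij)
      rwa [hlaw i, hlaw j] at h
    have hFsm : StronglyMeasurable (fun p : X × X => ⟪φ p.1 - m, φ p.2 - m⟫) :=
      ((hφmeas.comp_measurable measurable_fst).sub stronglyMeasurable_const).inner
        ((hφmeas.comp_measurable measurable_snd).sub stronglyMeasurable_const)
    have h1 : (∫ ω, ⟪Y i ω, Y j ω⟫ ∂μ)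
        = ∫ p : X × X, ⟪φ p.1 - m, φ p.2 - m⟫ ∂(Pstar.prod Pstar) := by
      rw [← hpairmap,
        integral_map ((hXmeas i).prodMk (hXmeas j)).aemeasurable hFsm.aestronglyMeasurable]
    rw [h1, MeasureTheory.integral_prod]
    · have h2 : ∀ a : X, (∫ b, ⟪φ a - m, φ b - m⟫ ∂Pstar) = 0 := by
        intro a
        rw [integral_inner hfint, hf0, inner_zero_right]
      simp [h2]
    · refine (integrable_const (4:ℝ)).mono' hFsm.aestronglyMeasurable
        (Filter.Eventually.of_forall fun p => ?_)
      have h3 := norm_inner_le_norm (𝕜 := ℝ) (φ p.1 - m) (φ p.2 - m)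
      have h4 : ‖φ p.1 - m‖ ≤ 2 := (norm_sub_le _ _).trans (by linarith [hφbdd p.1])
      have h5 : ‖φ p.2 - m‖ ≤ 2 := (norm_sub_le _ _).trans (by linarith [hφbdd p.2])
      have h6 : ‖φ p.1 - m‖ * ‖φ p.2 - m‖ ≤ 4 := by nlinarith [norm_nonneg (φ p.1 - m)]
      exact h3.trans h6
  -- diagonal terms are at most 1
  have hdiag : ∀ i : Fin n, (∫ ω, ‖Y i ω‖ ^ 2 ∂μ) ≤ 1 := by
    intro i
    have hnsm : StronglyMeasurable (fun x => ‖φ x - m‖ ^ 2) := by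
      have h : StronglyMeasurable (fun x : X => ‖φ x - m‖) :=
        (hφmeas.sub stronglyMeasurable_const).norm
      simpa [pow_two, Pi.mul_def] using h.mul h
    have hmap : (∫ ω, ‖Y i ω‖ ^ 2 ∂μ) = ∫ x, ‖φ x - m‖ ^ 2 ∂Pstar := by
      rw [← hlaw i]
      exact (integral_map (hXmeas i).aemeasurable hnsm.aestronglyMeasurable).symm
    rw [hmap]
    have hφsq : Integrable (fun x => ‖φ x‖ ^ 2) Pstar :=
      (integrable_const (1:ℝ)).mono' (hφmeas.norm.pow 2).aestronglyMeasurable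
        (Filter.Eventually.of_forall fun x => by
          have := hφbdd x
          have h0 := norm_nonneg (φ x)
          simp only [Real.norm_eq_abs, abs_of_nonneg (by positivity : (0:ℝ) ≤ ‖φ x‖ ^ 2)]
          nlinarith)
    have hinner : Integrable (fun x => ⟪φ x, m⟫) Pstar :=
      (integrable_const (1:ℝ)).mono' (hφmeas.inner stronglyMeasurable_const).aestronglyMeasurable
        (Filter.Eventually.of_forall fun x => by
          have h3 := norm_inner_le_norm (𝕜 := ℝ) (φ x) m
          have := mul_le_one₀ (hφbdd x) (norm_nonneg m) hm1
          exact h3.trans this)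
    have hIexp : (∫ x, ‖φ x - m‖ ^ 2 ∂Pstar)
        = (∫ x, ‖φ x‖ ^ 2 ∂Pstar) - ‖m‖ ^ 2 := by
      have hcong : (∫ x, ‖φ x - m‖ ^ 2 ∂Pstar)
          = ∫ x, ‖φ x‖ ^ 2 - 2 * ⟪φ x, m⟫ + ‖m‖ ^ 2 ∂Pstar := by
        refine integral_congr_ae (Filter.Eventually.of_forall fun x => ?_)
        exact norm_sub_sq_real _ _
      have hint1 : Integrable (fun x => ‖φ x‖ ^ 2 - 2 * ⟪φ x, m⟫) Pstar :=
        hφsq.sub (hinner.const_mul 2)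
      have hint2 : Integrable (fun x => (2:ℝ) * ⟪φ x, m⟫) Pstar := hinner.const_mul 2
      rw [hcong, integral_add hint1 (integrable_const _),
        integral_sub hφsq hint2, integral_const_mul, integral_const]
      have hmm : (∫ x, ⟪φ x, m⟫ ∂Pstar) = ‖m‖ ^ 2 := by
        have : (∫ x, ⟪φ x, m⟫ ∂Pstar) = ∫ x, ⟪m, φ x⟫ ∂Pstar := by
          refine integral_congr_ae (Filter.Eventually.of_forall fun x => ?_)
          exact real_inner_comm _ _
        rw [this, integral_inner hφint, ← hm_def, real_inner_self_eq_norm_sq]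
      rw [hmm]
      simp
      ring
    rw [hIexp]
    have h7 : (∫ x, ‖φ x‖ ^ 2 ∂Pstar) ≤ 1 := by
      calc (∫ x, ‖φ x‖ ^ 2 ∂Pstar) ≤ ∫ _x, (1:ℝ) ∂Pstar := by
            refine integral_mono hφsq (integrable_const 1) fun x => ?_
            have := hφbdd x
            nlinarith [norm_nonneg (φ x)]
        _ = 1 := by simp
    nlinarith [sq_nonneg ‖m‖]
  -- integrability of inner products
  have hYYint : ∀ i j : Fin n, Integrable (fun ω => ⟪Y i ω, Y j ω⟫) μ := by
    intro i j
    refine (integrable_const (4:ℝ)).mono' ((hYm i).inner (hYm j)).aestronglyMeasurable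
      (Filter.Eventually.of_forall fun ω => ?_)
    have h3 := norm_inner_le_norm (𝕜 := ℝ) (Y i ω) (Y j ω)
    have h6 : ‖Y i ω‖ * ‖Y j ω‖ ≤ 4 := by
      nlinarith [norm_nonneg (Y i ω), hYnorm i ω, hYnorm j ω]
    exact h3.trans h6
  -- second moment of S is at most n
  have hSsq : (∫ ω, ‖S ω‖ ^ 2 ∂μ) ≤ (n : ℝ) := by
    have hexp : ∀ ω, ‖S ω‖ ^ 2 = ∑ i, ∑ j, ⟪Y i ω, Y j ω⟫ := by
      intro ω
      rw [← real_inner_self_eq_norm_sq, hS_def]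
      rw [sum_inner]
      exact Finset.sum_congr rfl fun i _ => inner_sum _ _ _
    calc (∫ ω, ‖S ω‖ ^ 2 ∂μ) = ∑ i, ∑ j, ∫ ω, ⟪Y i ω, Y j ω⟫ ∂μ := by
          simp_rw [hexp]
          rw [integral_finset_sum _ fun i _ => integrable_finset_sum _ fun j _ => hYYint i j]
          exact Finset.sum_congr rfl fun i _ => integral_finset_sum _ fun j _ => hYYint i j
      _ ≤ ∑ _i : Fin n, (1:ℝ) := by
          refine Finset.sum_le_sum fun i _ => ?_
          rw [Finset.sum_eq_single i]
          · have : (∫ ω, ⟪Y i ω, Y i ω⟫ ∂μ) = ∫ ω, ‖Y i ω‖ ^ 2 ∂μ := by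
              refine integral_congr_ae (Filter.Eventually.of_forall fun ω => ?_)
              exact real_inner_self_eq_norm_sq _
            rw [this]; exact hdiag i
          · intro j _ hji; exact hoff i j (Ne.symm hji)
          · intro h; exact absurd (Finset.mem_univ i) h
      _ = (n : ℝ) := by simp
  -- Cauchy–Schwarz: E‖S‖ ≤ √(E‖S‖²) ≤ √n
  have hCS : (∫ ω, ‖S ω‖ ∂μ) ≤ Real.sqrt n := by
    have hpq : Real.HolderConjugate 2 2 := Real.HolderConjugate.two_two
    have hmem : MemLp (fun ω => ‖S ω‖) (ENNReal.ofReal 2) μ :=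
      MemLp.of_bound hSm.norm.aestronglyMeasurable (2 * n)
        (Filter.Eventually.of_forall fun ω => by
          simpa [abs_of_nonneg (norm_nonneg (S ω))] using hSnorm ω)
    have hone : MemLp (fun _ : Ω => (1:ℝ)) (ENNReal.ofReal 2) μ := memLp_const 1
    have h := integral_mul_le_Lp_mul_Lq_of_nonneg hpq
      (Filter.Eventually.of_forall fun ω => norm_nonneg (S ω))
      (Filter.Eventually.of_forall fun _ => zero_le_one) hmem hone
    simp only [mul_one] at h
    have hrw1 : (∫ ω, ‖S ω‖ ^ (2:ℝ) ∂μ) = ∫ ω, ‖S ω‖ ^ 2 ∂μ := by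
      refine integral_congr_ae (Filter.Eventually.of_forall fun ω => ?_)
      calc ‖S ω‖ ^ (2:ℝ) = ‖S ω‖ ^ ((2:ℕ):ℝ) := by norm_num
        _ = ‖S ω‖ ^ (2:ℕ) := Real.rpow_natCast _ 2
    have hrw2 : (∫ _ω : Ω, (1:ℝ) ^ (2:ℝ) ∂μ) = 1 := by simp
    rw [hrw1, hrw2] at h
    have hS2nonneg : (0:ℝ) ≤ ∫ ω, ‖S ω‖ ^ 2 ∂μ :=
      integral_nonneg fun ω => by positivity
    calc (∫ ω, ‖S ω‖ ∂μ) ≤ (∫ ω, ‖S ω‖ ^ 2 ∂μ) ^ ((1:ℝ)/2) * 1 ^ ((1:ℝ)/2) := h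
      _ = Real.sqrt (∫ ω, ‖S ω‖ ^ 2 ∂μ) := by
          rw [Real.one_rpow, mul_one, Real.sqrt_eq_rpow]
      _ ≤ Real.sqrt n := Real.sqrt_le_sqrt hSsq
  -- put everything together
  calc (∫ ω, ‖(n : ℝ)⁻¹ • (∑ i, φ (Xs i ω)) - m‖ ∂μ)
      = ∫ ω, (n:ℝ)⁻¹ * ‖S ω‖ ∂μ := by
        refine integral_congr_ae (Filter.Eventually.of_forall fun ω => ?_)
        show ‖(n : ℝ)⁻¹ • (∑ i, φ (Xs i ω)) - m‖ = (n:ℝ)⁻¹ * ‖S ω‖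
        rw [hpt ω, norm_smul, Real.norm_eq_abs, abs_of_nonneg (by positivity)]
    _ = (n:ℝ)⁻¹ * ∫ ω, ‖S ω‖ ∂μ := integral_const_mul _ _
    _ ≤ (n:ℝ)⁻¹ * Real.sqrt n := by
        exact mul_le_mul_of_nonneg_left hCS (by positivity)
    _ = 1 / Real.sqrt n := by
        have hs : Real.sqrt n ≠ 0 := by positivity
        rw [eq_div_iff hs, mul_assoc, Real.mul_self_sqrt hnR.le, inv_mul_cancel₀ hnR.ne']
end

section
/- Let x_1,…,x_n ∈ X be any points with empirical measure P_n = (1/n)∑_{i=1}^n δ_{x_i}, let P* and P be probability measures on X, and let θ* select a minimum-MMD parameter, i.e. MMD(P, P_{θ*(P)}) ≤ MMD(P, P_θ) for all θ ∈ Θ. Then MMD(P*, P_{θ*(P)}) ≤ inf_{θ∈Θ} MMD(P_θ, P*) + 2·MMD(P_n, P*) + 2·MMD(P, P_n). -/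
open MeasureTheory ProbabilityTheory
open scoped ENNReal NNReal BigOperators

/-- if `θ*` selects a minimum-MMD parameter, then for any points `x_{1:n}` with
empirical measure `P_n` and any probability measures `P*`, `P`,
`MMD(P*, P_{θ*(P)}) ≤ inf_θ MMD(P_θ, P*) + 2 MMD(P_n, P*) + 2 MMD(P, P_n)`. -/
theorem mmd_triangle_decomposition
    {X : Type*} [MeasurableSpace X] {H : Type*} [NormedAddCommGroup H]
    [InnerProductSpace ℝ H] [CompleteSpace H]
    (φ : X → H) (hφmeas : StronglyMeasurable φ) (hφbdd : ∀ x, ‖φ x‖ ≤ 1)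
    {Θ : Type*} [Nonempty Θ] (Pθ : Θ → Measure X) [∀ θ, IsProbabilityMeasure (Pθ θ)]
    (θs : Measure X → Θ)
    (hθs : ∀ (P : Measure X) (θ : Θ), mmd φ P (Pθ (θs P)) ≤ mmd φ P (Pθ θ))
    (n : ℕ) (x : Fin n → X)
    (Pstar : Measure X) [IsProbabilityMeasure Pstar]
    (P : Measure X) [IsProbabilityMeasure P] :
    mmd φ Pstar (Pθ (θs P))
      ≤ (⨅ θ : Θ, mmd φ (Pθ θ) Pstar) + 2 * mmd φ (empMeas n x) Pstar
        + 2 * mmd φ P (empMeas n x) := by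
  set a := ∫ y, φ y ∂Pstar with ha
  set e := ∫ y, φ y ∂(empMeas n x) with he
  set p := ∫ y, φ y ∂P with hp
  set t := ∫ y, φ y ∂(Pθ (θs P)) with ht
  have key : ∀ θ : Θ, mmd φ Pstar (Pθ (θs P)) - 2 * mmd φ (empMeas n x) Pstar
      - 2 * mmd φ P (empMeas n x) ≤ mmd φ (Pθ θ) Pstar := by
    intro θ
    have h1 := hθs P θ
    simp only [mmd] at h1 ⊢
    have t1 : ‖a - t‖ ≤ ‖a - e‖ + ‖e - p‖ + ‖p - t‖ := by
      calc ‖a - t‖ = ‖(a - e) + (e - p) + (p - t)‖ := by rw [show (a - e) + (e - p) + (p - t) = a - t by abel]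
        _ ≤ ‖(a - e) + (e - p)‖ + ‖p - t‖ := norm_add_le _ _
        _ ≤ ‖a - e‖ + ‖e - p‖ + ‖p - t‖ := by
            exact add_le_add_left (norm_add_le _ _) _
    have t2 : ‖p - ∫ y, φ y ∂(Pθ θ)‖ ≤ ‖p - e‖ + ‖e - a‖ + ‖a - ∫ y, φ y ∂(Pθ θ)‖ := by
      calc ‖p - ∫ y, φ y ∂(Pθ θ)‖
          = ‖(p - e) + (e - a) + (a - ∫ y, φ y ∂(Pθ θ))‖ := by
            rw [show (p - e) + (e - a) + (a - ∫ y, φ y ∂(Pθ θ)) = p - ∫ y, φ y ∂(Pθ θ) by abel]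
        _ ≤ ‖(p - e) + (e - a)‖ + ‖a - ∫ y, φ y ∂(Pθ θ)‖ := norm_add_le _ _
        _ ≤ ‖p - e‖ + ‖e - a‖ + ‖a - ∫ y, φ y ∂(Pθ θ)‖ :=
            add_le_add_left (norm_add_le _ _) _
    have s1 : ‖e - a‖ = ‖a - e‖ := norm_sub_rev _ _
    have s2 : ‖e - p‖ = ‖p - e‖ := norm_sub_rev _ _
    have s3 : ‖a - ∫ y, φ y ∂(Pθ θ)‖ = ‖(∫ y, φ y ∂(Pθ θ)) - a‖ := norm_sub_rev _ _
    linarith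
  have hbdd : BddBelow (Set.range fun θ : Θ => mmd φ (Pθ θ) Pstar) := by
    refine ⟨0, ?_⟩
    rintro r ⟨θ, rfl⟩
    exact norm_nonneg _
  have := le_ciInf key
  linarith
end

section
/- (Posterior consistency in the well-specified case.) Suppose inf_{θ∈Θ} MMD(P_θ, P*) = 0. Let X_1, X_2, … be i.i.d. with law P*, and for each n let P̂_n = ∑_{i=1}^n w_i^{(n)} δ_{X_i} + ∑_{k=1}^T w̃_k^{(n)} δ_{x̃_k^{(n)}} be the approximate DP posterior bootstrap sample based on X_1,…,X_n (with Dirichlet(1,…,1, α/T,…,α/T) weights realised as normalised independent Gamma variables and x̃_{1:T}^{(n)} i.i.d. from F, all independent of the data). Then for any sequence M_n → +∞ with M_n · n^{−1/2} → 0, the probability P( MMD(P*, P_{θ*(P̂_n)}) > M_n / n^{1/2} ) → 0 as n → ∞, where the probability is over data, weights and prior draws. -/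
open MeasureTheory ProbabilityTheory Filter
open scoped ENNReal NNReal BigOperators Topology

open Real
open scoped RealInnerProductSpace

section helpers
variable {Ω : Type*} [MeasurableSpace Ω] {μ : Measure Ω}

lemma my_integrable_dirac {X H : Type*} [MeasurableSpace X] [NormedAddCommGroup H]
    {f : X → H} (hf : StronglyMeasurable f) (x : X) :
    Integrable f (Measure.dirac x) := by
  refine ⟨hf.aestronglyMeasurable, ?_⟩
  rw [HasFiniteIntegral, lintegral_dirac' x hf.enorm]
  exact ENNReal.coe_lt_top

lemma my_integrable_smul_dirac {X H : Type*} [MeasurableSpace X] [NormedAddCommGroup H]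
    {f : X → H} (hf : StronglyMeasurable f) (c : ℝ≥0∞) (hc : c ≠ ∞) (x : X) :
    Integrable f (c • Measure.dirac x) := by
  rcases eq_or_ne c 0 with rfl | hc0
  · simp [integrable_zero_measure]
  · exact (integrable_smul_measure hc0 hc).mpr (my_integrable_dirac hf x)

lemma my_integral_smul_dirac {X H : Type*} [MeasurableSpace X] [NormedAddCommGroup H]
    [NormedSpace ℝ H] [CompleteSpace H]
    {f : X → H} (hf : StronglyMeasurable f) {c : ℝ} (hc : 0 ≤ c) (x : X) :
    ∫ y, f y ∂((ENNReal.ofReal c) • Measure.dirac x) = c • f x := by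
  rw [integral_smul_measure, integral_dirac' f x hf, ENNReal.toReal_ofReal hc]

lemma aux_mom {Y : Ω → ℝ} {ν : Measure ℝ} (hY : Measurable Y) (hlaw : Measure.map Y μ = ν)
    (p : ℕ) (hi : Integrable (fun x => x ^ p) ν) :
    Integrable (fun ω => Y ω ^ p) μ ∧ ∫ ω, Y ω ^ p ∂μ = ∫ x, x ^ p ∂ν := by
  subst hlaw
  have hsm : AEStronglyMeasurable (fun x : ℝ => x ^ p) (Measure.map Y μ) :=
    (measurable_id.pow_const p).aestronglyMeasurable
  constructor
  · exact (integrable_map_measure hsm hY.aemeasurable).mp hi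
  · exact (integral_map hY.aemeasurable hsm).symm

lemma aux_ae_nonneg {Y : Ω → ℝ} {ν : Measure ℝ} (hY : Measurable Y) (hlaw : Measure.map Y μ = ν)
    (h0 : ν (Set.Iio 0) = 0) : ∀ᵐ ω ∂μ, 0 ≤ Y ω := by
  subst hlaw
  rw [Measure.map_apply hY measurableSet_Iio] at h0
  rw [ae_iff]
  convert h0 using 2
  ext ω; simp [not_le]

lemma aux_ae_pos {Y : Ω → ℝ} {ν : Measure ℝ} (hY : Measurable Y) (hlaw : Measure.map Y μ = ν)
    (h0 : ν (Set.Iic 0) = 0) : ∀ᵐ ω ∂μ, 0 < Y ω := by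
  subst hlaw
  rw [Measure.map_apply hY measurableSet_Iic] at h0
  rw [ae_iff]
  convert h0 using 2
  ext ω; simp [not_lt]

end helpers

lemma gammaMeasure_Iio_zero (a r : ℝ) : gammaMeasure a r (Set.Iio 0) = 0 := by
  rw [gammaMeasure, withDensity_apply _ measurableSet_Iio]
  exact lintegral_gammaPDF_of_nonpos le_rfl

lemma gammaMeasure_Iic_zero (a r : ℝ) : gammaMeasure a r (Set.Iic 0) = 0 := by
  have h1 : (Set.Iic (0:ℝ)) = Set.Iio 0 ∪ {0} := by
    ext x; simp [le_iff_lt_or_eq]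
  have h2 : gammaMeasure a r {0} = 0 :=
    withDensity_absolutelyContinuous volume (gammaPDF a r) (measure_singleton 0)
  refine le_antisymm ?_ zero_le
  rw [h1]
  calc gammaMeasure a r (Set.Iio 0 ∪ {0}) ≤ _ + _ := measure_union_le _ _
  _ = 0 := by rw [gammaMeasure_Iio_zero, h2, add_zero]

lemma gamma_mom (a : ℝ) (ha : 0 < a) (p : ℕ) :
    Integrable (fun x : ℝ => x ^ p) (gammaMeasure a 1) ∧
    ∫ x, x ^ p ∂(gammaMeasure a 1) = Real.Gamma (a + p) / Real.Gamma a := by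
  have hap : (0:ℝ) < a + p := by positivity
  have hiden : ∀ x ∈ Set.Ioi (0:ℝ),
      gammaPDFReal a 1 x * x ^ p
        = (1 / Real.Gamma a) * (Real.exp (-x) * x ^ ((a + p) - 1)) := by
    intro x hx
    have hx0 : (0:ℝ) < x := hx
    rw [gammaPDFReal, if_pos hx0.le, Real.one_rpow]
    have h2 : x ^ ((a + p) - 1) = x ^ (a - 1) * x ^ p := by
      rw [← Real.rpow_natCast x p, ← Real.rpow_add hx0]
      ring_nf
    rw [h2]
    simp only [one_mul]
    ring
  have hmeas : Measurable (fun x : ℝ => gammaPDFReal a 1 x * x ^ p) :=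
    (measurable_gammaPDFReal a 1).mul (measurable_id.pow_const p)
  have hint : IntegrableOn (fun x => gammaPDFReal a 1 x * x ^ p) (Set.Ioi 0) := by
    refine (((Real.GammaIntegral_convergent hap).const_mul (1 / Real.Gamma a)).congr ?_)
    exact ((ae_restrict_iff' measurableSet_Ioi).mpr (ae_of_all _ fun x hx => (hiden x hx).symm))
  have hzero : (fun x => gammaPDFReal a 1 x * x ^ p)
      =ᵐ[volume.restrict (Set.Iic (0:ℝ))] 0 := by
    have h1 : ∀ᵐ x ∂(volume.restrict (Set.Iic (0:ℝ))), x ≠ 0 := by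
      refine ae_restrict_of_ae ?_
      have h2 : ({x : ℝ | ¬x ≠ 0}) = {0} := by ext x; simp
      rw [ae_iff, h2]; exact measure_singleton 0
    filter_upwards [h1, (ae_restrict_iff' measurableSet_Iic).mpr
      (ae_of_all _ fun x (hx : x ≤ 0) => hx)] with x hne hle
    rw [gammaPDFReal, if_neg (not_le.mpr (lt_of_le_of_ne hle hne))]
    simp
  have hint0 : IntegrableOn (fun x => gammaPDFReal a 1 x * x ^ p) (Set.Iic 0) :=
    (integrable_zero _ _ _).congr hzero.symm
  have hintall : Integrable (fun x => gammaPDFReal a 1 x * x ^ p) volume := by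
    have := hint0.union hint
    rwa [Set.Iic_union_Ioi, integrableOn_univ] at this
  have hval : ∫ x, gammaPDFReal a 1 x * x ^ p = Real.Gamma (a + p) / Real.Gamma a := by
    have hsplit : ∫ x, gammaPDFReal a 1 x * x ^ p
        = (∫ x in Set.Iic 0, gammaPDFReal a 1 x * x ^ p)
          + ∫ x in Set.Ioi 0, gammaPDFReal a 1 x * x ^ p := by
      rw [← setIntegral_union (Set.Iic_disjoint_Ioi le_rfl) measurableSet_Ioi hint0 hint,
        Set.Iic_union_Ioi]
      simp [Measure.restrict_univ]
    rw [hsplit, integral_congr_ae hzero]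
    simp only [Pi.zero_apply, integral_zero, zero_add]
    rw [setIntegral_congr_fun measurableSet_Ioi hiden, integral_const_mul]
    have h3 := Real.integral_rpow_mul_exp_neg_mul_Ioi hap (zero_lt_one)
    simp only [one_mul, Real.one_rpow] at h3
    rw [show (∫ x in Set.Ioi (0:ℝ), Real.exp (-x) * x ^ ((a + p) - 1))
        = ∫ x in Set.Ioi (0:ℝ), x ^ ((a + p) - 1) * Real.exp (-x) from
      integral_congr_ae (ae_of_all _ fun x => mul_comm _ _), h3]
    simp [div_eq_inv_mul]
  have hpdfeq : gammaPDF a 1 = fun x => ((Real.toNNReal (gammaPDFReal a 1 x) : ℝ≥0∞)) := rfl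
  have hmeasnn : Measurable fun x => Real.toNNReal (gammaPDFReal a 1 x) :=
    (measurable_gammaPDFReal a 1).real_toNNReal
  have hcoe : ∀ x : ℝ, ∀ y : ℝ, (Real.toNNReal (gammaPDFReal a 1 x)) • y
      = gammaPDFReal a 1 x * y := by
    intro x y
    rw [NNReal.smul_def, smul_eq_mul, Real.coe_toNNReal _ (gammaPDFReal_nonneg ha one_pos x)]
  constructor
  · rw [gammaMeasure, hpdfeq]
    rw [integrable_withDensity_iff hmeasnn.coe_nnreal_ennreal
      (ae_of_all _ fun x => ENNReal.coe_lt_top)]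
    refine hintall.congr (ae_of_all _ fun x => ?_)
    simp only [ENNReal.coe_toReal, Real.coe_toNNReal _ (gammaPDFReal_nonneg ha one_pos x)]
    ring
  · rw [gammaMeasure, hpdfeq, integral_withDensity_eq_integral_smul hmeasnn]
    rw [show (fun x => (Real.toNNReal (gammaPDFReal a 1 x)) • x ^ p)
        = fun x => gammaPDFReal a 1 x * x ^ p from funext fun x => hcoe x _]
    exact hval

lemma gamma_mean (a : ℝ) (ha : 0 < a) :
    Integrable (fun x : ℝ => x) (gammaMeasure a 1) ∧ ∫ x, x ∂(gammaMeasure a 1) = a := by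
  have h := gamma_mom a ha 1
  simp only [pow_one] at h
  refine ⟨h.1, ?_⟩
  rw [h.2]
  push_cast
  rw [Real.Gamma_add_one (ne_of_gt ha)]
  field_simp [(Real.Gamma_pos_of_pos ha).ne']

lemma exp_mean : Integrable (fun x : ℝ => x) (expMeasure 1) ∧ ∫ x, x ∂(expMeasure 1) = 1 := by
  have h : expMeasure 1 = gammaMeasure 1 1 := rfl
  rw [h]
  exact gamma_mean 1 one_pos

lemma exp_mom2 : Integrable (fun x : ℝ => x ^ 2) (expMeasure 1) ∧
    ∫ x, x ^ 2 ∂(expMeasure 1) = 2 := by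
  have heq : expMeasure 1 = gammaMeasure 1 1 := rfl
  rw [heq]
  have h := gamma_mom 1 one_pos 2
  refine ⟨h.1, ?_⟩
  rw [h.2]
  have h3 : (1:ℝ) + (2:ℕ) = ((2:ℕ) : ℝ) + 1 := by norm_num
  rw [h3, Real.Gamma_nat_eq_factorial, Real.Gamma_one]
  norm_num

set_option maxHeartbeats 2000000 in
/-- posterior consistency in the well-specified case. If
`inf_θ MMD(P_θ, P*) = 0`, then for the approximate DP posterior bootstrap samples `P̂_n`
built from the first `n` data points, Dirichlet(1,…,1, α/T,…,α/T) weights (normalised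
independent Gamma variables) and prior draws i.i.d. from `F` (all independent of the data),
for any `M_n → ∞` with `M_n/√n → 0`, `P( MMD(P*, P_{θ*(P̂_n)}) > M_n/√n ) → 0`. -/
theorem mmd_posterior_bootstrap_consistency_wellspecified
    {X : Type*} [MeasurableSpace X] {H : Type*} [NormedAddCommGroup H]
    [InnerProductSpace ℝ H] [CompleteSpace H]
    (φ : X → H) (hφmeas : StronglyMeasurable φ) (hφbdd : ∀ x, ‖φ x‖ ≤ 1)
    {Θ : Type*} [Nonempty Θ] (Pθ : Θ → Measure X) [∀ θ, IsProbabilityMeasure (Pθ θ)]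
    (θs : Measure X → Θ)
    (hθs : ∀ (P : Measure X) (θ : Θ), mmd φ P (Pθ (θs P)) ≤ mmd φ P (Pθ θ))
    {Ω : Type*} [MeasurableSpace Ω] (μ : Measure Ω) [IsProbabilityMeasure μ]
    (α : ℝ) (hα : 0 < α) (T : ℕ) (hT : 1 ≤ T)
    (Pstar : Measure X) [IsProbabilityMeasure Pstar]
    (F : Measure X) [IsProbabilityMeasure F]
    -- the model is well specified
    (hws : (⨅ θ : Θ, mmd φ (Pθ θ) Pstar) = 0)
    -- the data: an i.i.d. sequence with law `P*`
    (Xs : ℕ → Ω → X) (hXmeas : ∀ i, Measurable (Xs i))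
    (hXlaw : ∀ i, Measure.map (Xs i) μ = Pstar)
    -- for each sample size `n`: prior draws (i.i.d. `F`, independent of the data) and
    -- raw Gamma variables behind the Dirichlet weights
    (xt : ℕ → Fin T → Ω → X) (hxtmeas : ∀ n k, Measurable (xt n k))
    (hxtlaw : ∀ n k, Measure.map (xt n k) μ = F)
    (hDindep : ∀ n : ℕ, iIndepFun
        (Sum.elim Xs (xt n) : ℕ ⊕ Fin T → Ω → X) μ)
    (Ew : (n : ℕ) → Fin n → Ω → ℝ) (Gw : ℕ → Fin T → Ω → ℝ)
    (hEmeas : ∀ n i, Measurable (Ew n i)) (hGmeas : ∀ n k, Measurable (Gw n k))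
    (hElaw : ∀ n i, Measure.map (Ew n i) μ = expMeasure 1)
    (hGlaw : ∀ n k, Measure.map (Gw n k) μ = gammaMeasure (α / T) 1)
    (hEGindep : ∀ n : ℕ, iIndepFun
        (Sum.elim (Ew n) (Gw n) : Fin n ⊕ Fin T → Ω → ℝ) μ)
    -- the weights are independent of the data and the prior draws
    (hDWindep : ∀ n : ℕ, IndepFun (fun ω => fun j : ℕ ⊕ Fin T => Sum.elim Xs (xt n) j ω)
        (fun ω => fun j : Fin n ⊕ Fin T => Sum.elim (Ew n) (Gw n) j ω) μ)
    -- the approximate DP posterior bootstrap samples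
    (S : (n : ℕ) → Ω → ℝ) (hS : ∀ n ω, S n ω = ∑ i, Ew n i ω + ∑ k, Gw n k ω)
    (Phat : (n : ℕ) → Ω → Measure X)
    (hPhat : ∀ n ω, Phat n ω
        = (∑ i : Fin n, ENNReal.ofReal (Ew n i ω / S n ω) • Measure.dirac (Xs (i : ℕ) ω))
          + ∑ k, ENNReal.ofReal (Gw n k ω / S n ω) • Measure.dirac (xt n k ω))
    -- the diverging sequence `M_n` and measurability of the events
    (M : ℕ → ℝ) (hM : Tendsto M atTop atTop)
    (hM' : Tendsto (fun n : ℕ => M n / Real.sqrt n) atTop (𝓝 0))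
    (hEvent : ∀ n, MeasurableSet
        {ω | mmd φ Pstar (Pθ (θs (Phat n ω))) > M n / Real.sqrt n}) :
    Tendsto (fun n : ℕ =>
        μ {ω | mmd φ Pstar (Pθ (θs (Phat n ω))) > M n / Real.sqrt n})
      atTop (𝓝 0) := by
  classical
  haveI : Nonempty (Fin T) := ⟨⟨0, Nat.lt_of_lt_of_le Nat.zero_lt_one hT⟩⟩
  have htri : ∀ u v w : H, ‖u - w‖ ≤ ‖u - v‖ + ‖v - w‖ := fun u v w => by
    simpa [sub_add_sub_cancel] using norm_add_le (u - v) (v - w)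
  -- the mmd-projection reduction
  have hred : ∀ Q : Measure X, mmd φ Pstar (Pθ (θs Q)) ≤ 2 * mmd φ Pstar Q := by
    intro Q
    have h1 : ∀ θ : Θ, mmd φ Pstar (Pθ (θs Q)) - 2 * mmd φ Pstar Q ≤ mmd φ (Pθ θ) Pstar := by
      intro θ
      have t1 : mmd φ Pstar (Pθ (θs Q)) ≤ mmd φ Pstar Q + mmd φ Q (Pθ (θs Q)) := htri _ _ _
      have t2 := hθs Q θ
      have t3 : mmd φ Q (Pθ θ) ≤ mmd φ Q Pstar + mmd φ Pstar (Pθ θ) := htri _ _ _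
      have t4 : mmd φ Q Pstar = mmd φ Pstar Q := norm_sub_rev _ _
      have t5 : mmd φ Pstar (Pθ θ) = mmd φ (Pθ θ) Pstar := norm_sub_rev _ _
      linarith
    have h2 := le_ciInf h1
    rw [hws] at h2
    linarith
  -- global objects
  have hφint : ∀ (P : Measure X), IsProbabilityMeasure P → Integrable φ P := by
    intro P hP
    exact Integrable.mono' (integrable_const 1) hφmeas.aestronglyMeasurable
      (ae_of_all _ hφbdd)
  set m : H := ∫ x, φ x ∂Pstar with hm_def
  have hm1 : ‖m‖ ≤ 1 := by
    calc ‖m‖ ≤ ∫ x, ‖φ x‖ ∂Pstar := norm_integral_le_integral_norm φ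
    _ ≤ ∫ _x, (1:ℝ) ∂Pstar := integral_mono (hφint Pstar inferInstance).norm
        (integrable_const 1) hφbdd
    _ = 1 := by simp
  set Z : X → H := fun x => φ x - m with hZ_def
  have hZsm : StronglyMeasurable Z := hφmeas.sub stronglyMeasurable_const
  have hZbd : ∀ x, ‖Z x‖ ≤ 2 := by
    intro x
    calc ‖φ x - m‖ ≤ ‖φ x‖ + ‖m‖ := norm_sub_le _ _
    _ ≤ 1 + 1 := add_le_add (hφbdd x) hm1
    _ = 2 := by norm_num
  have hZint : Integrable Z Pstar := (hφint Pstar inferInstance).sub (integrable_const m)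
  have hZmean : ∫ x, Z x ∂Pstar = 0 := by
    rw [hZ_def, integral_sub (hφint Pstar inferInstance) (integrable_const m), integral_const]
    simp [hm_def]
  have hinsm : StronglyMeasurable (fun p : X × X => ⟪Z p.1, Z p.2⟫) :=
    (hZsm.comp_measurable measurable_fst).inner (hZsm.comp_measurable measurable_snd)
  have hinint : Integrable (fun p : X × X => ⟪Z p.1, Z p.2⟫) (Pstar.prod Pstar) := by
    refine Integrable.mono' (integrable_const 4) hinsm.aestronglyMeasurable
      (ae_of_all _ fun p => ?_)
    rw [Real.norm_eq_abs]
    calc |⟪Z p.1, Z p.2⟫| ≤ ‖Z p.1‖ * ‖Z p.2‖ := abs_real_inner_le_norm _ _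
    _ ≤ 2 * 2 := mul_le_mul (hZbd _) (hZbd _) (norm_nonneg _) (by norm_num)
    _ = 4 := by norm_num
  have hinner0 : ∫ p : X × X, ⟪Z p.1, Z p.2⟫ ∂(Pstar.prod Pstar) = 0 := by
    rw [MeasureTheory.integral_prod _ hinint]
    have h1 : ∀ x : X, ∫ y, ⟪Z x, Z y⟫ ∂Pstar = 0 := fun x => by
      rw [integral_inner hZint, hZmean, inner_zero_right]
    simp [h1]
  -- the key quantitative bound
  have key : ∀ n : ℕ, 1 ≤ n → 0 < M n →
      μ {ω | mmd φ Pstar (Pθ (θs (Phat n ω))) > M n / Real.sqrt n}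
        ≤ ENNReal.ofReal (768 / (M n)^2 + (16*α+32) / (M n)) := by
    intro n hn1 hMn
    have hn0 : (0:ℝ) < n := by exact_mod_cast hn1
    have hnne : ((n:ℝ)) ≠ 0 := hn0.ne'
    have hsq : (0:ℝ) < Real.sqrt n := Real.sqrt_pos.mpr hn0
    have hsq1 : (1:ℝ) ≤ Real.sqrt n := by
      rw [Real.one_le_sqrt]
      exact_mod_cast hn1
    set t := M n / Real.sqrt n with ht_def
    have ht : 0 < t := div_pos hMn hsq
    set c : Fin n → Ω → ℝ := fun i ω => Ew n i ω / S n ω with hc_def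
    set d : Fin T → Ω → ℝ := fun k ω => Gw n k ω / S n ω with hd_def
    set W : Ω → H := fun ω => ∑ i, c i ω • Z (Xs (i:ℕ) ω) with hW_def
    set R : Ω → H := fun ω => ∑ k, d k ω • Z (xt n k ω) with hR_def
    set VE : Ω → ℝ := fun ω => ∑ i, Ew n i ω with hVE_def
    set Aset : Set Ω := {ω | VE ω < (n:ℝ)/2} with hA_def
    -- measurability
    have hVEmeas : Measurable VE := Finset.measurable_sum _ fun i _ => hEmeas n i
    have hSmeas : Measurable (S n) := by
      have h0 : S n = fun ω => VE ω + ∑ k, Gw n k ω := funext fun ω => hS n ω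
      rw [h0]
      exact hVEmeas.add (Finset.measurable_sum _ fun k _ => hGmeas n k)
    have hcmeas : ∀ i, Measurable (c i) := fun i => (hEmeas n i).div hSmeas
    have hdmeas : ∀ k, Measurable (d k) := fun k => (hGmeas n k).div hSmeas
    have hAmeas : MeasurableSet Aset := measurableSet_lt hVEmeas measurable_const
    have hZXsm : ∀ i : Fin n, StronglyMeasurable (fun ω => Z (Xs (i:ℕ) ω)) :=
      fun i => hZsm.comp_measurable (hXmeas i)
    have hZxtsm : ∀ k : Fin T, StronglyMeasurable (fun ω => Z (xt n k ω)) :=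
      fun k => hZsm.comp_measurable (hxtmeas n k)
    have hWsm : StronglyMeasurable W := by
      rw [hW_def]
      exact Finset.stronglyMeasurable_fun_sum _ fun i _ =>
        ((hcmeas i).stronglyMeasurable.smul (hZXsm i))
    have hRsm : StronglyMeasurable R := by
      rw [hR_def]
      exact Finset.stronglyMeasurable_fun_sum _ fun k _ =>
        ((hdmeas k).stronglyMeasurable.smul (hZxtsm k))
    -- a.e. positivity facts
    have hE0 : ∀ᵐ ω ∂μ, ∀ i, 0 ≤ Ew n i ω := (ae_all_iff).mpr fun i =>
      aux_ae_nonneg (hEmeas n i) (hElaw n i) (gammaMeasure_Iio_zero 1 1)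
    have hG0 : ∀ᵐ ω ∂μ, ∀ k, 0 < Gw n k ω := (ae_all_iff).mpr fun k =>
      aux_ae_pos (hGmeas n k) (hGlaw n k) (gammaMeasure_Iic_zero _ 1)
    -- pointwise weight facts
    have hpt : ∀ ω, (∀ i, 0 ≤ Ew n i ω) → (∀ k, 0 < Gw n k ω) →
        0 < S n ω ∧ (∀ i, 0 ≤ c i ω ∧ c i ω ≤ 1) ∧ (∀ k, 0 ≤ d k ω)
          ∧ (∑ i, c i ω + ∑ k, d k ω = 1) ∧ (∑ k, d k ω ≤ 1) := by
      intro ω hE hG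
      have hVE : 0 ≤ VE ω := Finset.sum_nonneg fun i _ => hE i
      have hVG : 0 < ∑ k, Gw n k ω := Finset.sum_pos (fun k _ => hG k) Finset.univ_nonempty
      have hSpos : 0 < S n ω := by
        rw [hS]
        exact add_pos_of_nonneg_of_pos hVE hVG
      refine ⟨hSpos, fun i => ?_, fun k => div_nonneg (hG k).le hSpos.le, ?_, ?_⟩
      · refine ⟨div_nonneg (hE i) hSpos.le, (div_le_one hSpos).mpr ?_⟩
        have h1 : Ew n i ω ≤ VE ω := Finset.single_le_sum (fun j _ => hE j) (Finset.mem_univ i)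
        rw [hS]
        have : VE ω = ∑ i, Ew n i ω := rfl
        linarith
      · rw [hc_def, hd_def]
        simp only []
        rw [← Finset.sum_div, ← Finset.sum_div, ← add_div, ← hS n ω, div_self hSpos.ne']
      · rw [hd_def]
        simp only []
        rw [← Finset.sum_div, div_le_one hSpos, hS]
        have : VE ω = ∑ i, Ew n i ω := rfl
        linarith
    -- moments
    have hEi1 : ∀ i : Fin n, Integrable (fun ω => Ew n i ω) μ ∧ ∫ ω, Ew n i ω ∂μ = 1 := by
      intro i
      have h := aux_mom (hEmeas n i) (hElaw n i) 1 (by simpa only [pow_one] using exp_mean.1)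
      simp only [pow_one] at h
      exact ⟨h.1, h.2.trans exp_mean.2⟩
    have hEi2 : ∀ i : Fin n, Integrable (fun ω => Ew n i ω ^ 2) μ
        ∧ ∫ ω, Ew n i ω ^ 2 ∂μ = 2 := by
      intro i
      have h := aux_mom (hEmeas n i) (hElaw n i) 2 exp_mom2.1
      exact ⟨h.1, h.2.trans exp_mom2.2⟩
    have hT0 : (0:ℝ) < (T:ℝ) := by exact_mod_cast Nat.lt_of_lt_of_le Nat.zero_lt_one hT
    have hαT : 0 < α / (T:ℝ) := div_pos hα hT0
    have hGk1 : ∀ k : Fin T, Integrable (fun ω => Gw n k ω) μ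
        ∧ ∫ ω, Gw n k ω ∂μ = α / T := by
      intro k
      have h := aux_mom (hGmeas n k) (hGlaw n k) 1
        (by simpa only [pow_one] using (gamma_mean _ hαT).1)
      simp only [pow_one] at h
      exact ⟨h.1, h.2.trans (gamma_mean _ hαT).2⟩
    -- Chebyshev
    have hpair_int : ∀ i j : Fin n, Integrable (fun ω => Ew n i ω * Ew n j ω) μ := by
      intro i j
      rcases eq_or_ne i j with rfl | hij
      · simpa [pow_two] using (hEi2 i).1
      · exact IndepFun.integrable_mul
          ((hEGindep n).indepFun (i := Sum.inl i) (j := Sum.inl j) (by simpa using hij))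
          (hEi1 i).1 (hEi1 j).1
    have hpair_val : ∀ i j : Fin n, i ≠ j → ∫ ω, Ew n i ω * Ew n j ω ∂μ = 1 := by
      intro i j hij
      have hind := (hEGindep n).indepFun (i := Sum.inl i) (j := Sum.inl j) (by simpa using hij)
      have h2 : ∫ ω, Ew n i ω * Ew n j ω ∂μ
          = (∫ ω, Ew n i ω ∂μ) * ∫ ω, Ew n j ω ∂μ :=
        hind.integral_fun_mul_eq_mul_integral (hEmeas n i).aestronglyMeasurable (hEmeas n j).aestronglyMeasurable
      rw [h2, (hEi1 i).2, (hEi1 j).2, mul_one]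
    have hexp2 : ∀ ω, VE ω ^ 2 = ∑ i, ∑ j, Ew n i ω * Ew n j ω := by
      intro ω
      rw [hVE_def]
      simp only []
      rw [sq, Finset.sum_mul_sum]
    have hV2int : Integrable (fun ω => VE ω ^ 2) μ := by
      rw [show (fun ω => VE ω ^ 2) = fun ω => ∑ i, ∑ j, Ew n i ω * Ew n j ω from
        funext hexp2]
      exact integrable_finset_sum _ fun i _ => integrable_finset_sum _ fun j _ => hpair_int i j
    have hVint : Integrable VE μ := by
      rw [hVE_def]
      exact integrable_finset_sum _ fun i _ => (hEi1 i).1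
    have hVmean : ∫ ω, VE ω ∂μ = n := by
      rw [hVE_def]
      simp only []
      rw [integral_finset_sum _ fun i _ => (hEi1 i).1,
        Finset.sum_congr rfl fun i _ => (hEi1 i).2]
      simp
    have hV2 : ∫ ω, VE ω ^ 2 ∂μ = (n:ℝ)^2 + n := by
      rw [integral_congr_ae (ae_of_all _ hexp2),
        integral_finset_sum _ (fun i _ => integrable_finset_sum _ fun j _ => hpair_int i j)]
      have h3 : ∀ i : Fin n, (∫ ω, ∑ j, Ew n i ω * Ew n j ω ∂μ) = (n:ℝ) + 1 := by
        intro i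
        rw [integral_finset_sum _ fun j _ => hpair_int i j]
        have h4 : ∀ j : Fin n, (∫ ω, Ew n i ω * Ew n j ω ∂μ)
            = 1 + if j = i then 1 else 0 := by
          intro j
          rcases eq_or_ne j i with rfl | hij
          · simp only [if_pos rfl]
            rw [show (fun ω => Ew n j ω * Ew n j ω) = fun ω => Ew n j ω ^ 2 from
              funext fun ω => (sq _).symm]
            rw [(hEi2 j).2]
            norm_num
          · rw [hpair_val i j (fun h => hij (h.symm)), if_neg hij]
            norm_num
        rw [Finset.sum_congr rfl fun j _ => h4 j, Finset.sum_add_distrib]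
        simp [Finset.sum_ite_eq]
      rw [Finset.sum_congr rfl fun i _ => h3 i]
      simp only [Finset.sum_const, Finset.card_univ, Fintype.card_fin, nsmul_eq_mul]
      ring
    have hQint : Integrable (fun ω => (VE ω - n)^2) μ := by
      rw [show (fun ω => (VE ω - n)^2)
          = fun ω => (VE ω ^ 2 - (2*(n:ℝ)) * VE ω) + (n:ℝ)^2 from funext fun ω => by ring]
      exact (hV2int.sub (hVint.const_mul _)).add (integrable_const _)
    have hQval : ∫ ω, (VE ω - n)^2 ∂μ = n := by
      rw [show (fun ω => (VE ω - n)^2)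
          = fun ω => (VE ω ^ 2 - (2*(n:ℝ)) * VE ω) + (n:ℝ)^2 from funext fun ω => by ring]
      have hb : Integrable (fun ω => (2*(n:ℝ)) * VE ω) μ := hVint.const_mul _
      have ha : Integrable (fun ω => VE ω ^ 2 - (2*(n:ℝ)) * VE ω) μ := hV2int.sub hb
      rw [integral_add ha (integrable_const _), integral_sub hV2int hb,
        integral_const_mul, hV2, hVmean, integral_const]
      simp only [measure_univ, ENNReal.toReal_one, smul_eq_mul, one_mul, probReal_univ]
      ring
    have hpn : (μ Aset).toReal ≤ 4 / n := by
      have hsub : Aset ⊆ {ω | ((n:ℝ)/2)^2 ≤ (VE ω - n)^2} := by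
        intro ω hω
        have h6 : VE ω < (n:ℝ)/2 := hω
        have h7 : (n:ℝ)/2 ≤ |VE ω - n| := by
          rw [abs_sub_comm, abs_of_nonneg (by linarith : (0:ℝ) ≤ (n:ℝ) - VE ω)]
          linarith
        have h8 : ((n:ℝ)/2)^2 ≤ |VE ω - n|^2 := by
          apply pow_le_pow_left₀ (by positivity) h7
        rwa [sq_abs] at h8
      have h8 := mul_meas_ge_le_integral_of_nonneg
        (ae_of_all μ fun ω => sq_nonneg (VE ω - n)) hQint (((n:ℝ)/2)^2)
      have h9 : (μ Aset).toReal ≤ (μ {ω | ((n:ℝ)/2)^2 ≤ (VE ω - n)^2}).toReal :=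
        ENNReal.toReal_mono (measure_ne_top _ _) (measure_mono hsub)
      have hq : (0:ℝ) < ((n:ℝ)/2)^2 := by positivity
      have h11 : (μ {ω | ((n:ℝ)/2)^2 ≤ (VE ω - n)^2}).toReal ≤ (n:ℝ) / (((n:ℝ)/2)^2) := by
        rw [le_div_iff₀ hq]
        calc (μ _).toReal * ((n:ℝ)/2)^2 = ((n:ℝ)/2)^2 * (μ _).toReal := mul_comm _ _
        _ ≤ ∫ ω, (VE ω - n)^2 ∂μ := h8
        _ = n := hQval
      have h12 : (n:ℝ) / (((n:ℝ)/2)^2) = 4 / n := by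
        field_simp
        ring
      linarith
    -- the B bound
    set B : Ω → ℝ := fun ω => (4/(n:ℝ)^2) * (∑ i, Ew n i ω ^ 2)
      + Set.indicator Aset (fun _ => (1:ℝ)) ω with hB_def
    have hBint : Integrable B μ := by
      rw [hB_def]
      exact ((integrable_finset_sum _ fun i _ => (hEi2 i).1).const_mul _).add
        ((integrable_const (1:ℝ)).indicator hAmeas)
    have hBval : ∫ ω, B ω ∂μ ≤ 12 / n := by
      rw [hB_def]
      rw [integral_add ((integrable_finset_sum _ fun i _ => (hEi2 i).1).const_mul _)
        ((integrable_const (1:ℝ)).indicator hAmeas), integral_const_mul,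
        integral_finset_sum _ fun i _ => (hEi2 i).1,
        Finset.sum_congr rfl fun i _ => (hEi2 i).2,
        integral_indicator_const _ hAmeas]
      simp only [Finset.sum_const, Finset.card_univ, Fintype.card_fin, smul_eq_mul, mul_one,
        nsmul_eq_mul]
      have e1 : (4/(n:ℝ)^2) * ((n:ℝ) * 2) = 8 / n := by
        field_simp
        ring
      rw [e1]
      have e2 : (8:ℝ)/n + 4/n = 12/n := by ring
      linarith [show μ.real Aset = (μ Aset).toReal from rfl]
    -- cross terms
    have hterm_meas : ∀ i j : Fin n, AEStronglyMeasurable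
        (fun ω => (c i ω * c j ω) * ⟪Z (Xs (i:ℕ) ω), Z (Xs (j:ℕ) ω)⟫) μ := fun i j =>
      (((hcmeas i).mul (hcmeas j)).mul
        ((hZXsm i).inner (hZXsm j)).measurable).aestronglyMeasurable
    have hinner_bd : ∀ (u v : H), ‖u‖ ≤ 2 → ‖v‖ ≤ 2 → |⟪u, v⟫| ≤ 4 := by
      intro u v hu hv
      calc |⟪u, v⟫| ≤ ‖u‖ * ‖v‖ := abs_real_inner_le_norm _ _
      _ ≤ 2 * 2 := mul_le_mul hu hv (norm_nonneg _) (by norm_num)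
      _ = 4 := by norm_num
    have hterm_int : ∀ i j : Fin n, Integrable
        (fun ω => (c i ω * c j ω) * ⟪Z (Xs (i:ℕ) ω), Z (Xs (j:ℕ) ω)⟫) μ := by
      intro i j
      refine Integrable.mono' (integrable_const 4) (hterm_meas i j) ?_
      filter_upwards [hE0, hG0] with ω hE hG
      obtain ⟨hSpos, hc01, -, -, -⟩ := hpt ω hE hG
      rw [Real.norm_eq_abs, abs_mul, abs_mul]
      have h1 : |c i ω| ≤ 1 := by rw [abs_of_nonneg (hc01 i).1]; exact (hc01 i).2
      have h2 : |c j ω| ≤ 1 := by rw [abs_of_nonneg (hc01 j).1]; exact (hc01 j).2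
      have h3 := hinner_bd _ _ (hZbd (Xs (i:ℕ) ω)) (hZbd (Xs (j:ℕ) ω))
      calc |c i ω| * |c j ω| * |⟪Z (Xs (i:ℕ) ω), Z (Xs (j:ℕ) ω)⟫|
          ≤ 1 * 4 := mul_le_mul (mul_le_one₀ h1 (abs_nonneg _) h2) h3 (abs_nonneg _) zero_le_one
      _ = 4 := by norm_num
    have hcross : ∀ i j : Fin n, i ≠ j →
        ∫ ω, (c i ω * c j ω) * ⟪Z (Xs (i:ℕ) ω), Z (Xs (j:ℕ) ω)⟫ ∂μ = 0 := by
      intro i j hij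
      have hne : ((i:ℕ)) ≠ ((j:ℕ)) := by simpa [Fin.val_inj] using hij
      -- independence of the pair of data points
      have hXij : IndepFun (Xs (i:ℕ)) (Xs (j:ℕ)) μ :=
        (hDindep n).indepFun (i := Sum.inl (i:ℕ)) (j := Sum.inl (j:ℕ)) (by simpa using hne)
      have hmap : μ.map (fun ω => (Xs (i:ℕ) ω, Xs (j:ℕ) ω)) = Pstar.prod Pstar := by
        rw [(indepFun_iff_map_prod_eq_prod_map_map (hXmeas (i:ℕ)).aemeasurable
          (hXmeas (j:ℕ)).aemeasurable).mp hXij, hXlaw, hXlaw]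
      have hEZ : ∫ ω, ⟪Z (Xs (i:ℕ) ω), Z (Xs (j:ℕ) ω)⟫ ∂μ = 0 := by
        have h13 : ∫ p : X × X, ⟪Z p.1, Z p.2⟫
              ∂(μ.map (fun ω => (Xs (i:ℕ) ω, Xs (j:ℕ) ω)))
            = ∫ ω, ⟪Z (Xs (i:ℕ) ω), Z (Xs (j:ℕ) ω)⟫ ∂μ := by
          rw [integral_map ((hXmeas (i:ℕ)).prodMk (hXmeas (j:ℕ))).aemeasurable
            (by rw [hmap]; exact hinsm.aestronglyMeasurable)]
        rw [← h13, hmap]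
        exact hinner0
      -- independence of weights and data
      have hψw : Measurable (fun v : (Fin n ⊕ Fin T) → ℝ =>
          (v (Sum.inl i) / (∑ i', v (Sum.inl i') + ∑ k, v (Sum.inr k)))
            * (v (Sum.inl j) / (∑ i', v (Sum.inl i') + ∑ k, v (Sum.inr k)))) := by
        have hsum : Measurable (fun v : (Fin n ⊕ Fin T) → ℝ =>
            (∑ i', v (Sum.inl i') + ∑ k, v (Sum.inr k))) :=
          (Finset.measurable_sum _ fun i' _ => measurable_pi_apply (Sum.inl i')).add
            (Finset.measurable_sum _ fun k _ => measurable_pi_apply (Sum.inr k))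
        exact ((measurable_pi_apply _).div hsum).mul ((measurable_pi_apply _).div hsum)
      have hψd : Measurable (fun v : (ℕ ⊕ Fin T) → X =>
          (⟪Z (v (Sum.inl (i:ℕ))), Z (v (Sum.inl (j:ℕ)))⟫)) := by
        have h14 : StronglyMeasurable (fun v : (ℕ ⊕ Fin T) → X =>
            (⟪Z (v (Sum.inl (i:ℕ))), Z (v (Sum.inl (j:ℕ)))⟫)) :=
          (hZsm.comp_measurable (measurable_pi_apply _)).inner
            (hZsm.comp_measurable (measurable_pi_apply _))
        exact h14.measurable
      have hbase := (hDWindep n).symm.comp hψw hψd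
      have hpair : IndepFun (fun ω => c i ω * c j ω)
          (fun ω => ⟪Z (Xs (i:ℕ) ω), Z (Xs (j:ℕ) ω)⟫) μ := by
        refine hbase.congr ?_ ?_
        · refine ae_of_all _ fun ω => ?_
          show _ = c i ω * c j ω
          rw [hc_def]
          simp only [Function.comp_apply, Sum.elim_inl, Sum.elim_inr, hS]
        · exact ae_of_all _ fun ω => rfl
      have h15 : ∫ ω, (c i ω * c j ω) * ⟪Z (Xs (i:ℕ) ω), Z (Xs (j:ℕ) ω)⟫ ∂μ
          = (∫ ω, c i ω * c j ω ∂μ) * ∫ ω, ⟪Z (Xs (i:ℕ) ω), Z (Xs (j:ℕ) ω)⟫ ∂μ :=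
        hpair.integral_fun_mul_eq_mul_integral ((hcmeas i).mul (hcmeas j)).aestronglyMeasurable
          ((hZXsm i).inner (hZXsm j)).aestronglyMeasurable
      rw [h15, hEZ, mul_zero]
    -- expansion of the squared norm
    have hWexp : ∀ ω, ‖W ω‖^2
        = ∑ i, ∑ j, (c i ω * c j ω) * ⟪Z (Xs (i:ℕ) ω), Z (Xs (j:ℕ) ω)⟫ := by
      intro ω
      rw [hW_def]
      simp only []
      rw [← real_inner_self_eq_norm_sq, sum_inner]
      refine Finset.sum_congr rfl fun i _ => ?_
      rw [real_inner_smul_left, inner_sum, Finset.mul_sum]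
      refine Finset.sum_congr rfl fun j _ => ?_
      rw [real_inner_smul_right]
      ring
    have hW2 : ∫ ω, ‖W ω‖^2 ∂μ ≤ 48 / n := by
      have e1 : ∫ ω, ‖W ω‖^2 ∂μ
          = ∑ i : Fin n, ∑ j : Fin n,
              ∫ ω, (c i ω * c j ω) * ⟪Z (Xs (i:ℕ) ω), Z (Xs (j:ℕ) ω)⟫ ∂μ := by
        rw [integral_congr_ae (ae_of_all _ hWexp),
          integral_finset_sum _ fun i _ => integrable_finset_sum _ fun j _ => hterm_int i j]
        exact Finset.sum_congr rfl fun i _ => integral_finset_sum _ fun j _ => hterm_int i j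
      have e2 : ∀ i : Fin n,
          (∑ j : Fin n, ∫ ω, (c i ω * c j ω) * ⟪Z (Xs (i:ℕ) ω), Z (Xs (j:ℕ) ω)⟫ ∂μ)
            = ∫ ω, (c i ω * c i ω) * ⟪Z (Xs (i:ℕ) ω), Z (Xs (i:ℕ) ω)⟫ ∂μ := fun i =>
        Finset.sum_eq_single_of_mem i (Finset.mem_univ i)
          (fun j _ hji => hcross i j (Ne.symm hji))
      rw [e1, Finset.sum_congr rfl fun i _ => e2 i,
        ← integral_finset_sum _ fun i _ => hterm_int i i]
      have e3 : ∫ ω, (∑ i, (c i ω * c i ω) * ⟪Z (Xs (i:ℕ) ω), Z (Xs (i:ℕ) ω)⟫) ∂μ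
          ≤ ∫ ω, 4 * B ω ∂μ := by
        refine integral_mono_ae (integrable_finset_sum _ fun i _ => hterm_int i i)
          (hBint.const_mul 4) ?_
        filter_upwards [hE0, hG0] with ω hE hG
        obtain ⟨hSpos, hc01, hd0, hsum1, hdle⟩ := hpt ω hE hG
        have hZsq : ∀ i : Fin n, ⟪Z (Xs (i:ℕ) ω), Z (Xs (i:ℕ) ω)⟫ ≤ 4 := fun i => by
          rw [real_inner_self_eq_norm_sq]
          nlinarith [hZbd (Xs (i:ℕ) ω), norm_nonneg (Z (Xs (i:ℕ) ω))]
        have step1 : (∑ i, (c i ω * c i ω) * ⟪Z (Xs (i:ℕ) ω), Z (Xs (i:ℕ) ω)⟫)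
            ≤ ∑ i, 4 * (c i ω * c i ω) := by
          refine Finset.sum_le_sum fun i _ => ?_
          calc (c i ω * c i ω) * ⟪Z (Xs (i:ℕ) ω), Z (Xs (i:ℕ) ω)⟫
              ≤ (c i ω * c i ω) * 4 :=
                mul_le_mul_of_nonneg_left (hZsq i) (mul_self_nonneg _)
          _ = 4 * (c i ω * c i ω) := mul_comm _ _
        have step2 : ∑ i, c i ω * c i ω ≤ B ω := by
          have hfirst : 0 ≤ (4/(n:ℝ)^2) * ∑ i, Ew n i ω ^ 2 :=
            mul_nonneg (by positivity) (Finset.sum_nonneg fun i _ => sq_nonneg _)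
          have hind0 : 0 ≤ Set.indicator Aset (fun _ => (1:ℝ)) ω :=
            Set.indicator_nonneg (fun _ _ => zero_le_one) ω
          rcases lt_or_ge (VE ω) ((n:ℝ)/2) with hlt | hge
          · have hcle : ∑ i, c i ω * c i ω ≤ ∑ i, c i ω :=
              Finset.sum_le_sum fun i _ => by nlinarith [(hc01 i).1, (hc01 i).2]
            have hdsum : 0 ≤ ∑ k, d k ω := Finset.sum_nonneg fun k _ => hd0 k
            have hcsum : ∑ i, c i ω ≤ 1 := by linarith
            have hind : Set.indicator Aset (fun _ => (1:ℝ)) ω = 1 :=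
              Set.indicator_of_mem (show ω ∈ Aset from hlt) _
            rw [hB_def]
            simp only []
            rw [hind]
            linarith
          · have hSge : (n:ℝ)/2 ≤ S n ω := by
              rw [hS]
              have hVG : 0 ≤ ∑ k, Gw n k ω := Finset.sum_nonneg fun k _ => (hG k).le
              have : VE ω = ∑ i, Ew n i ω := rfl
              linarith
            have hc2 : ∀ i : Fin n, c i ω * c i ω ≤ (4/(n:ℝ)^2) * Ew n i ω ^ 2 := by
              intro i
              have h1 : c i ω ≤ Ew n i ω / ((n:ℝ)/2) := by
                rw [hc_def]
                simp only []
                gcongr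
                exact hE i
              have h2 : Ew n i ω / ((n:ℝ)/2) = 2 * Ew n i ω / n := by
                field_simp
              have h3 : c i ω ≤ 2 * Ew n i ω / n := h2 ▸ h1
              have h4 : c i ω * c i ω ≤ (2 * Ew n i ω / n) * (2 * Ew n i ω / n) :=
                mul_le_mul h3 h3 (hc01 i).1 (le_trans (hc01 i).1 h3)
              have h5 : (2 * Ew n i ω / n) * (2 * Ew n i ω / n)
                  = (4/(n:ℝ)^2) * Ew n i ω ^ 2 := by
                field_simp
                ring
              linarith
            calc ∑ i, c i ω * c i ω ≤ ∑ i, (4/(n:ℝ)^2) * Ew n i ω ^ 2 :=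
                Finset.sum_le_sum fun i _ => hc2 i
            _ = (4/(n:ℝ)^2) * ∑ i, Ew n i ω ^ 2 := (Finset.mul_sum _ _ _).symm
            _ ≤ B ω := by
                rw [hB_def]
                simp only []
                linarith
        calc (∑ i, (c i ω * c i ω) * ⟪Z (Xs (i:ℕ) ω), Z (Xs (i:ℕ) ω)⟫)
            ≤ ∑ i, 4 * (c i ω * c i ω) := step1
        _ = 4 * ∑ i, c i ω * c i ω := (Finset.mul_sum _ _ _).symm
        _ ≤ 4 * B ω := by linarith
      calc ∫ ω, (∑ i, (c i ω * c i ω) * ⟪Z (Xs (i:ℕ) ω), Z (Xs (i:ℕ) ω)⟫) ∂μ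
          ≤ ∫ ω, 4 * B ω ∂μ := e3
      _ = 4 * ∫ ω, B ω ∂μ := integral_const_mul 4 _
      _ ≤ 4 * (12/n) := by linarith
      _ = 48/n := by ring
    -- the R bound
    have hd2 : ∀ᵐ ω ∂μ, ‖R ω‖ ≤ 2 * ((2/(n:ℝ)) * (∑ k, Gw n k ω)
        + Set.indicator Aset (fun _ => (1:ℝ)) ω) ∧ ‖R ω‖ ≤ 2 := by
      filter_upwards [hE0, hG0] with ω hE hG
      obtain ⟨hSpos, hc01, hd0, hsum1, hdle⟩ := hpt ω hE hG
      have hnorm : ‖R ω‖ ≤ 2 * ∑ k, d k ω := by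
        rw [hR_def]
        simp only []
        calc ‖∑ k, d k ω • Z (xt n k ω)‖ ≤ ∑ k, ‖d k ω • Z (xt n k ω)‖ := norm_sum_le _ _
        _ ≤ ∑ k, d k ω * 2 := Finset.sum_le_sum fun k _ => by
            rw [norm_smul, Real.norm_eq_abs, abs_of_nonneg (hd0 k)]
            exact mul_le_mul_of_nonneg_left (hZbd _) (hd0 k)
        _ = 2 * ∑ k, d k ω := by rw [← Finset.sum_mul]; ring
      have hind0 : 0 ≤ Set.indicator Aset (fun _ => (1:ℝ)) ω :=
        Set.indicator_nonneg (fun _ _ => zero_le_one) ω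
      have hG2 : 0 ≤ (2/(n:ℝ)) * ∑ k, Gw n k ω :=
        mul_nonneg (by positivity) (Finset.sum_nonneg fun k _ => (hG k).le)
      constructor
      · rcases lt_or_ge (VE ω) ((n:ℝ)/2) with hlt | hge
        · have hind : Set.indicator Aset (fun _ => (1:ℝ)) ω = 1 :=
            Set.indicator_of_mem (show ω ∈ Aset from hlt) _
          rw [hind]
          linarith
        · have hSge : (n:ℝ)/2 ≤ S n ω := by
            rw [hS]
            have hVG : 0 ≤ ∑ k, Gw n k ω := Finset.sum_nonneg fun k _ => (hG k).le
            have : VE ω = ∑ i, Ew n i ω := rfl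
            linarith
          have hdk : ∀ k : Fin T, d k ω ≤ (2/(n:ℝ)) * Gw n k ω := by
            intro k
            have h1 : d k ω ≤ Gw n k ω / ((n:ℝ)/2) := by
              rw [hd_def]
              simp only []
              gcongr
              exact (hG k).le
            have h2 : Gw n k ω / ((n:ℝ)/2) = (2/(n:ℝ)) * Gw n k ω := by
              field_simp
            linarith
          have hds : ∑ k, d k ω ≤ (2/(n:ℝ)) * ∑ k, Gw n k ω := by
            calc ∑ k, d k ω ≤ ∑ k, (2/(n:ℝ)) * Gw n k ω := Finset.sum_le_sum fun k _ => hdk k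
            _ = (2/(n:ℝ)) * ∑ k, Gw n k ω := (Finset.mul_sum _ _ _).symm
          linarith
      · linarith
    have hRint : Integrable (fun ω => ‖R ω‖) μ := by
      refine Integrable.mono' (integrable_const 2) hRsm.norm.aestronglyMeasurable ?_
      filter_upwards [hd2] with ω h
      rw [Real.norm_eq_abs, abs_of_nonneg (norm_nonneg _)]
      exact h.2
    have hR1 : ∫ ω, ‖R ω‖ ∂μ ≤ (4*α+8) / n := by
      have hrhs_int : Integrable (fun ω => 2 * ((2/(n:ℝ)) * (∑ k, Gw n k ω)
          + Set.indicator Aset (fun _ => (1:ℝ)) ω)) μ :=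
        (((integrable_finset_sum _ fun k _ => (hGk1 k).1).const_mul _).add
          ((integrable_const (1:ℝ)).indicator hAmeas)).const_mul 2
      have h15 := integral_mono_ae hRint hrhs_int (hd2.mono fun ω h => h.1)
      rw [integral_const_mul, integral_add
        ((integrable_finset_sum _ fun k _ => (hGk1 k).1).const_mul _)
        ((integrable_const (1:ℝ)).indicator hAmeas), integral_const_mul,
        integral_finset_sum _ fun k _ => (hGk1 k).1,
        Finset.sum_congr rfl fun k _ => (hGk1 k).2,
        integral_indicator_const _ hAmeas] at h15
      have hTsum : (∑ _k : Fin T, α/(T:ℝ)) = α := by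
        rw [Finset.sum_const, Finset.card_univ, Fintype.card_fin, nsmul_eq_mul]
        field_simp
      rw [hTsum] at h15
      simp only [smul_eq_mul, mul_one] at h15
      calc ∫ ω, ‖R ω‖ ∂μ ≤ 2*((2/(n:ℝ))*α + (μ Aset).toReal) := h15
      _ ≤ 2*((2/(n:ℝ))*α + 4/n) := by
          have := hpn
          nlinarith
      _ = (4*α+8)/n := by
          field_simp
          ring
    -- step 1 : identification of the mmd of the bootstrap measure
    have hmmd_eq : ∀ᵐ ω ∂μ, mmd φ Pstar (Phat n ω) = ‖W ω + R ω‖ := by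
      filter_upwards [hE0, hG0] with ω hE hG
      obtain ⟨hSpos, hc01, hd0, hsum1, -⟩ := hpt ω hE hG
      have hint1 : ∀ i : Fin n, Integrable φ
          (ENNReal.ofReal (Ew n i ω / S n ω) • Measure.dirac (Xs (i:ℕ) ω)) :=
        fun i => my_integrable_smul_dirac hφmeas _ ENNReal.ofReal_ne_top _
      have hint2 : ∀ k : Fin T, Integrable φ
          (ENNReal.ofReal (Gw n k ω / S n ω) • Measure.dirac (xt n k ω)) :=
        fun k => my_integrable_smul_dirac hφmeas _ ENNReal.ofReal_ne_top _
      have hI1 : Integrable φ (∑ i : Fin n,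
          ENNReal.ofReal (Ew n i ω / S n ω) • Measure.dirac (Xs (i:ℕ) ω)) :=
        integrable_finset_sum_measure.mpr fun i _ => hint1 i
      have hI2 : Integrable φ (∑ k : Fin T,
          ENNReal.ofReal (Gw n k ω / S n ω) • Measure.dirac (xt n k ω)) :=
        integrable_finset_sum_measure.mpr fun k _ => hint2 k
      have hintPhat : ∫ x, φ x ∂(Phat n ω)
          = (∑ i, c i ω • φ (Xs (i:ℕ) ω)) + ∑ k, d k ω • φ (xt n k ω) := by
        rw [hPhat n ω, integral_add_measure hI1 hI2,
          integral_finset_sum_measure (fun i _ => hint1 i),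
          integral_finset_sum_measure (fun k _ => hint2 k)]
        congr 1
        · exact Finset.sum_congr rfl fun i _ =>
            my_integral_smul_dirac hφmeas (div_nonneg (hE i) hSpos.le) _
        · exact Finset.sum_congr rfl fun k _ =>
            my_integral_smul_dirac hφmeas (div_nonneg (hG k).le hSpos.le) _
      have hWR : W ω + R ω
          = ((∑ i, c i ω • φ (Xs (i:ℕ) ω)) + ∑ k, d k ω • φ (xt n k ω)) - m := by
        rw [hW_def, hR_def]
        simp only [hZ_def, smul_sub]
        rw [Finset.sum_sub_distrib, Finset.sum_sub_distrib, ← Finset.sum_smul,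
          ← Finset.sum_smul]
        have hsm : (∑ i, c i ω) • m + (∑ k, d k ω) • m = m := by
          rw [← add_smul, hsum1, one_smul]
        rw [sub_add_sub_comm, hsm]
      show mmd φ Pstar (Phat n ω) = ‖W ω + R ω‖
      have : mmd φ Pstar (Phat n ω) = ‖m - ∫ x, φ x ∂(Phat n ω)‖ := rfl
      rw [this, hintPhat, hWR, norm_sub_rev]
    -- Markov for W
    have hW2int : Integrable (fun ω => ‖W ω‖^2) μ := by
      refine Integrable.mono' (integrable_const 4)
        ((hWsm.norm.measurable.pow_const 2).aestronglyMeasurable) ?_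
      filter_upwards [hE0, hG0] with ω hE hG
      obtain ⟨hSpos, hc01, hd0, hsum1, hdle⟩ := hpt ω hE hG
      have hWle : ‖W ω‖ ≤ 2 := by
        rw [hW_def]
        simp only []
        calc ‖∑ i, c i ω • Z (Xs (i:ℕ) ω)‖ ≤ ∑ i, ‖c i ω • Z (Xs (i:ℕ) ω)‖ :=
            norm_sum_le _ _
        _ ≤ ∑ i, c i ω * 2 := Finset.sum_le_sum fun i _ => by
            rw [norm_smul, Real.norm_eq_abs, abs_of_nonneg (hc01 i).1]
            exact mul_le_mul_of_nonneg_left (hZbd _) (hc01 i).1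
        _ = 2 * ∑ i, c i ω := by rw [← Finset.sum_mul]; ring
        _ ≤ 2 * 1 := by
            have hdsum : 0 ≤ ∑ k, d k ω := Finset.sum_nonneg fun k _ => hd0 k
            have : ∑ i, c i ω ≤ 1 := by linarith
            linarith
        _ = 2 := by norm_num
      rw [Real.norm_eq_abs, abs_of_nonneg (sq_nonneg _)]
      nlinarith [norm_nonneg (W ω)]
    have hmar1 : (μ {ω | t/4 ≤ ‖W ω‖}).toReal ≤ 768 / (M n)^2 := by
      have hset : {ω | t/4 ≤ ‖W ω‖} = {ω | (t/4)^2 ≤ ‖W ω‖^2} := by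
        ext ω
        simp only [Set.mem_setOf_eq]
        constructor
        · intro h
          exact pow_le_pow_left₀ (by positivity) h 2
        · intro h
          exact le_of_pow_le_pow_left₀ two_ne_zero (norm_nonneg _) h
      have h8 := mul_meas_ge_le_integral_of_nonneg
        (ae_of_all μ fun ω => sq_nonneg ‖W ω‖) hW2int ((t/4)^2)
      have hq : (0:ℝ) < (t/4)^2 := by positivity
      have h11 : (μ {ω | (t/4)^2 ≤ ‖W ω‖^2}).toReal ≤ (48/(n:ℝ)) / ((t/4)^2) := by
        rw [le_div_iff₀ hq]
        calc (μ _).toReal * (t/4)^2 = (t/4)^2 * (μ _).toReal := mul_comm _ _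
        _ ≤ ∫ ω, ‖W ω‖^2 ∂μ := h8
        _ ≤ 48/(n:ℝ) := hW2
      have ht2 : t^2 = (M n)^2 / n := by
        rw [ht_def, div_pow, Real.sq_sqrt hn0.le]
      have e5 : ((t/4)^2) = (M n)^2/(16*(n:ℝ)) := by
        rw [div_pow, ht2]
        ring
      have e6 : (48/(n:ℝ))/((M n)^2/(16*(n:ℝ))) = 768/(M n)^2 := by
        field_simp
        ring
      rw [hset]
      calc (μ {ω | (t/4)^2 ≤ ‖W ω‖^2}).toReal ≤ (48/(n:ℝ)) / ((t/4)^2) := h11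
      _ = 768/(M n)^2 := by rw [e5, e6]
    have hmar2 : (μ {ω | t/4 ≤ ‖R ω‖}).toReal ≤ (16*α+32) / (M n) := by
      have h8 := mul_meas_ge_le_integral_of_nonneg
        (ae_of_all μ fun ω => norm_nonneg (R ω)) hRint (t/4)
      have hq : (0:ℝ) < t/4 := by positivity
      have h11 : (μ {ω | t/4 ≤ ‖R ω‖}).toReal ≤ ((4*α+8)/(n:ℝ)) / (t/4) := by
        rw [le_div_iff₀ hq]
        calc (μ _).toReal * (t/4) = (t/4) * (μ _).toReal := mul_comm _ _
        _ ≤ ∫ ω, ‖R ω‖ ∂μ := h8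
        _ ≤ (4*α+8)/(n:ℝ) := hR1
      have e7 : ((4*α+8)/(n:ℝ)) / (t/4) = (16*α+32)/((n:ℝ)*t) := by
        field_simp
        ring
      have e8 : (n:ℝ)*t = Real.sqrt n * M n := by
        rw [ht_def]
        rw [mul_div_assoc']
        rw [mul_comm ((n:ℝ)) (M n), mul_div_assoc, Real.div_sqrt]
        ring
      have e9 : (16*α+32)/((n:ℝ)*t) ≤ (16*α+32)/(M n) := by
        have h16 : (0:ℝ) < (n:ℝ)*t := by positivity
        rw [div_le_div_iff₀ h16 hMn]
        have h17 : M n ≤ (n:ℝ)*t := by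
          rw [e8]
          exact le_mul_of_one_le_left hMn.le hsq1
        exact mul_le_mul_of_nonneg_left h17 (by linarith)
      calc (μ {ω | t/4 ≤ ‖R ω‖}).toReal ≤ ((4*α+8)/(n:ℝ)) / (t/4) := h11
      _ = (16*α+32)/((n:ℝ)*t) := e7
      _ ≤ (16*α+32)/(M n) := e9
    -- event inclusion and conclusion
    have hmmd2 : ∀ᵐ ω ∂μ, mmd φ Pstar (Pθ (θs (Phat n ω))) ≤ 2 * ‖W ω + R ω‖ := by
      filter_upwards [hmmd_eq] with ω h
      calc mmd φ Pstar (Pθ (θs (Phat n ω))) ≤ 2 * mmd φ Pstar (Phat n ω) := hred _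
      _ = 2 * ‖W ω + R ω‖ := by rw [h]
    have hincl : ∀ᵐ ω ∂μ, ω ∈ {ω | mmd φ Pstar (Pθ (θs (Phat n ω))) > t} →
        ω ∈ ({ω | t/4 ≤ ‖W ω‖} ∪ {ω | t/4 ≤ ‖R ω‖} : Set Ω) := by
      filter_upwards [hmmd2] with ω h hmem
      by_contra hC
      simp only [Set.mem_union, Set.mem_setOf_eq, not_or, not_le] at hC
      have h16 := norm_add_le (W ω) (R ω)
      have hmem' : t < mmd φ Pstar (Pθ (θs (Phat n ω))) := hmem
      linarith [hC.1, hC.2]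
    have hf1 : μ {ω | t/4 ≤ ‖W ω‖} ≤ ENNReal.ofReal (768/(M n)^2) := by
      rw [← ENNReal.ofReal_toReal (measure_ne_top μ _)]
      exact ENNReal.ofReal_le_ofReal hmar1
    have hf2 : μ {ω | t/4 ≤ ‖R ω‖} ≤ ENNReal.ofReal ((16*α+32)/(M n)) := by
      rw [← ENNReal.ofReal_toReal (measure_ne_top μ _)]
      exact ENNReal.ofReal_le_ofReal hmar2
    calc μ {ω | mmd φ Pstar (Pθ (θs (Phat n ω))) > t}
        ≤ μ ({ω | t/4 ≤ ‖W ω‖} ∪ {ω | t/4 ≤ ‖R ω‖}) := measure_mono_ae hincl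
    _ ≤ μ {ω | t/4 ≤ ‖W ω‖} + μ {ω | t/4 ≤ ‖R ω‖} := measure_union_le _ _
    _ ≤ ENNReal.ofReal (768/(M n)^2) + ENNReal.ofReal ((16*α+32)/(M n)) :=
        add_le_add hf1 hf2
    _ = ENNReal.ofReal (768/(M n)^2 + (16*α+32)/(M n)) := by
        rw [← ENNReal.ofReal_add (div_nonneg (by norm_num) (sq_nonneg _))
          (div_nonneg (by linarith) hMn.le)]
  -- conclude
  have hMpos : ∀ᶠ n in atTop, 0 < M n := hM.eventually_gt_atTop 0
  have hup : ∀ᶠ n in atTop, μ {ω | mmd φ Pstar (Pθ (θs (Phat n ω))) > M n / Real.sqrt n}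
      ≤ ENNReal.ofReal (768 / (M n)^2 + (16*α+32) / (M n)) := by
    filter_upwards [hMpos, eventually_ge_atTop 1] with n h1 h2
    exact key n h2 h1
  have hM2 : Tendsto (fun n => (M n)^2) atTop atTop := by
    simpa [sq] using hM.atTop_mul_atTop₀ hM
  have hg0 : Tendsto (fun n => 768 / (M n)^2 + (16*α+32) / (M n)) atTop (𝓝 0) := by
    have l1 : Tendsto (fun n => 768 / (M n)^2) atTop (𝓝 0) := by
      simpa [div_eq_mul_inv] using (hM2.inv_tendsto_atTop).const_mul (768:ℝ)
    have l2 : Tendsto (fun n => (16*α+32) / (M n)) atTop (𝓝 0) := by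
      simpa [div_eq_mul_inv] using (hM.inv_tendsto_atTop).const_mul (16*α+32)
    simpa using l1.add l2
  have hgE : Tendsto (fun n => ENNReal.ofReal (768 / (M n)^2 + (16*α+32) / (M n)))
      atTop (𝓝 0) := by
    have h := ENNReal.tendsto_ofReal hg0
    simpa using h
  exact tendsto_of_tendsto_of_tendsto_of_le_of_le' tendsto_const_nhds hgE
    (Eventually.of_forall fun n => zero_le) hup
end
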